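/- arXiv:0907.2577 — 5 statements merged into one kernel-verified Lean document; each statement's English description precedes it below -/
import Mathlib

section
/- For any prime p, any non-negative integers a and j with 0 ≤ a < p, any positive integers N_1, N_2, …, N_k, and any integer L with 1 ≤ L ≤ max(N_1,…,N_k), the p-adic valuation of the rational number 𝐁_𝐍(a+pj)·(H_{Lj+⌊La/p⌋} − H_{Lj}) is at least 1, i.e., 𝐁_𝐍(a+pj)·(H_{Lj+⌊La/p⌋} − H_{Lj}) ∈ pℤ_p. -/
open Finset

/-- The `n`-th harmonic number `H_n = 1 + 1/2 + ⋯ + 1/n`, as a rational (`H_0 = 0`). -/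
def harm (n : ℕ) : ℚ := ∑ i ∈ Finset.range n, (1 : ℚ) / (i + 1)

/-- Subsets of the set of distinct prime factors of `N` having even cardinality. -/
def evenSub (N : ℕ) : Finset (Finset ℕ) :=
  N.primeFactors.powerset.filter fun J => Even J.card

/-- Subsets of the set of distinct prime factors of `N` having odd cardinality. -/
def oddSub (N : ℕ) : Finset (Finset ℕ) :=
  N.primeFactors.powerset.filter fun J => Odd J.card

/-- `∏_{j=1}^μ (α_j m)!`, where the `α_j` are the quotients of `N` by products of evenly
many distinct prime factors of `N`. -/
def Bnum (N m : ℕ) : ℕ :=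
  ∏ J ∈ evenSub N, Nat.factorial ((N / ∏ p ∈ J, p) * m)

/-- `∏_{j=1}^η (β_j m)!`, where the `β_j` are the quotients of `N` by products of oddly
many distinct prime factors of `N`, padded with `φ(N)` entries equal to `1` (so that
`Σ α_j = Σ β_j`). -/
def Bden (N m : ℕ) : ℕ :=
  (∏ J ∈ oddSub N, Nat.factorial ((N / ∏ p ∈ J, p) * m)) * (Nat.factorial m) ^ N.totient

/-- `𝐁_N(m) = (∏ (α_j m)!)/(∏ (β_j m)!)`. -/
noncomputable def BB (N m : ℕ) : ℚ := (Bnum N m : ℚ) / (Bden N m : ℚ)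

/-- `𝐁_𝐍(m) = ∏_{j=1}^k 𝐁_{N_j}(m)` for a vector `𝐍 = (N_1, …, N_k)`. -/
noncomputable def BBvec {k : ℕ} (N : Fin k → ℕ) (m : ℕ) : ℚ := ∏ i, BB (N i) m

/-!
By Legendre's formula, `v_p(𝐁_N(m)) = ∑_{e ≥ 1} (∑ ⌊α m / p^e⌋ - ∑ ⌊β m / p^e⌋)`,
and inclusion–exclusion over the prime factors of `N` identifies the `e`-th term with the
number of integers in `[1, ⌊N {m / p^e}⌋]` coprime to `N`. In particular every `𝐁_N(m)` is
`p`-integral.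

Write `H_{Lj+f} - H_{Lj} = ∑_{i<f} 1/(Lj+i+1)` with `f = ⌊La/p⌋` and pick `N_t ≥ L`. For
`m = a + pj` one has `m mod p^(e+1) = a + p (j mod p^e)`, so if `p^e` divides `n = Lj+i+1`
then `L (j mod p^e) + i + 1 ≥ p^e` and hence `N_t (m mod p^(e+1)) ≥ p^(e+1)`. Thus each of
the levels `1, …, v_p(n) + 1` contributes at least one to `v_p(𝐁_{N_t}(m))`, so
`v_p(𝐁_𝐍(m)/n) ≥ 1`, and the ultrametric inequality concludes.
-/

def coprimeCount (N t : ℕ) : ℕ := #{k ∈ Ioc 0 t | k.Coprime N}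

theorem filter_powerset_primeFactors_prod_dvd (N k : ℕ) :
    {J ∈ N.primeFactors.powerset | ∏ q ∈ J, q ∣ k} =
      {q ∈ N.primeFactors | q ∣ k}.powerset := by
  ext J
  simp only [mem_filter, mem_powerset, subset_iff]
  refine ⟨fun ⟨hJ, hdvd⟩ q hq => ⟨hJ hq, (dvd_prod_of_mem _ hq).trans hdvd⟩,
    fun h => ⟨fun q hq => (h hq).1, prod_primes_dvd k ?_ fun q hq => (h hq).2⟩⟩
  exact fun q hq => (Nat.prime_of_mem_primeFactors (h hq).1).prime

theorem filter_primeFactors_dvd_eq_empty_iff {N : ℕ} (hN : N ≠ 0) (k : ℕ) :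
    {q ∈ N.primeFactors | q ∣ k} = ∅ ↔ k.Coprime N := by
  simp only [filter_eq_empty_iff, Nat.mem_primeFactors]
  refine ⟨fun h => Nat.coprime_of_dvd fun q hq hqk hqN => h ⟨hq, hqN, hN⟩ hqk,
    fun hcop q ⟨hq, hqN, _⟩ hqk => ?_⟩
  exact Nat.Prime.not_coprime_iff_dvd.2 ⟨q, hq, hqk, hqN⟩ hcop

theorem sum_powerset_primeFactors_neg_one_pow_mul_div {N : ℕ} (hN : N ≠ 0) (t : ℕ) :
    ∑ J ∈ N.primeFactors.powerset, (-1 : ℤ) ^ #J * (t / ∏ q ∈ J, q : ℕ) =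
      coprimeCount N t := by
  have hcount : ∀ J ∈ N.primeFactors.powerset, (-1 : ℤ) ^ #J * (t / ∏ q ∈ J, q : ℕ)
      = ∑ k ∈ Ioc 0 t, if ∏ q ∈ J, q ∣ k then (-1 : ℤ) ^ #J else 0 := by
    intro J _
    rw [← Nat.Ioc_filter_dvd_card_eq_div, ← sum_filter, sum_const, nsmul_eq_mul, mul_comm]
  have hcancel : ∀ k ∈ Ioc 0 t,
      (∑ J ∈ N.primeFactors.powerset, if ∏ q ∈ J, q ∣ k then (-1 : ℤ) ^ #J else 0)
        = if k.Coprime N then 1 else 0 := by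
    intro k _
    rw [← sum_filter, filter_powerset_primeFactors_prod_dvd, sum_powerset_neg_one_pow_card]
    simp only [filter_primeFactors_dvd_eq_empty_iff hN]
  rw [sum_congr rfl hcount, sum_comm, sum_congr rfl hcancel, sum_boole, coprimeCount]

theorem coprimeCount_add_self (N t : ℕ) :
    coprimeCount N (t + N) = coprimeCount N t + N.totient := by
  have hdisj : Disjoint (Ioc 0 t) (Ioc t (t + N)) :=
    disjoint_left.2 fun x hx hx' => by simp only [mem_Ioc] at hx hx'; omega
  have hshift : Ioc t (t + N) = Ico (t + 1) (t + 1 + N) := by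
    rw [← Icc_add_one_left_eq_Ioc, ← Ico_add_one_right_eq_Icc]; congr 1; omega
  rw [coprimeCount, coprimeCount, ← Ioc_union_Ioc_eq_Ioc (Nat.zero_le t) (Nat.le_add_right t N),
    filter_union, card_union_of_disjoint (disjoint_filter_filter hdisj), hshift,
    ← Nat.filter_coprime_Ico_eq_totient N (t + 1)]
  simp only [Nat.coprime_comm]

theorem coprimeCount_mul_add (N q s : ℕ) :
    coprimeCount N (N * q + s) = q * N.totient + coprimeCount N s := by
  induction q with
  | zero => simp
  | succ q ih =>
    rw [show N * (q + 1) + s = N * q + s + N by ring, coprimeCount_add_self, ih]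
    ring

theorem one_le_coprimeCount (N : ℕ) {t : ℕ} (ht : 1 ≤ t) : 1 ≤ coprimeCount N t :=
  card_pos.2 ⟨1, mem_filter.2 ⟨mem_Ioc.2 ⟨one_pos, ht⟩, Nat.coprime_one_left N⟩⟩

theorem Nat.div_mul_div_eq_mul_div_div {N d : ℕ} (hd : d ∣ N) (m P : ℕ) :
    N / d * m / P = N * m / P / d := by
  rw [Nat.div_mul_right_comm hd, Nat.div_div_eq_div_mul, Nat.div_div_eq_div_mul, mul_comm d]

theorem Nat.mul_div_eq_mul_div_add_mul_mod_div (N m : ℕ) {P : ℕ} (hP : 0 < P) :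
    N * m / P = N * (m / P) + N * (m % P) / P := by
  conv_lhs =>
    rw [← Nat.mod_add_div m P, mul_add, mul_left_comm, Nat.add_mul_div_left _ _ hP, add_comm]

theorem Nat.mod_pow_succ_eq_add_mul_mod {p a j : ℕ} (ha : a < p) (e : ℕ) :
    (a + p * j) % p ^ (e + 1) = a + p * (j % p ^ e) := by
  have hp : 0 < p := by omega
  rw [pow_succ', Nat.mod_mul, Nat.add_mul_mod_self_left, Nat.mod_eq_of_lt ha,
    Nat.add_mul_div_left _ _ hp, Nat.div_eq_of_lt ha, zero_add]

theorem Nat.pow_succ_le_mul_mod {p a j L M i e : ℕ} (ha : a < p) (hLM : L ≤ M)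
    (hi : i + 1 ≤ L * a / p) (hdvd : p ^ e ∣ L * j + i + 1) :
    p ^ (e + 1) ≤ M * ((a + p * j) % p ^ (e + 1)) := by
  set s := j % p ^ e
  have hcongr : L * s + i + 1 ≡ L * j + i + 1 [MOD p ^ e] :=
    ((Nat.mod_modEq j _).mul_left L).add_right _ |>.add_right _
  have hs : p ^ e ≤ L * s + i + 1 := Nat.le_of_dvd (by omega) ((hcongr.dvd_iff dvd_rfl).2 hdvd)
  have hia : (i + 1) * p ≤ L * a := (Nat.le_div_iff_mul_le (by omega)).1 hi
  rw [Nat.mod_pow_succ_eq_add_mul_mod ha]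
  calc p ^ (e + 1) = p * p ^ e := pow_succ' ..
    _ ≤ p * (L * s + i + 1) := Nat.mul_le_mul_left p hs
    _ = L * (p * s) + (i + 1) * p := by ring
    _ ≤ M * (p * s) + M * a :=
      add_le_add (Nat.mul_le_mul_right _ hLM) (hia.trans (Nat.mul_le_mul_right a hLM))
    _ = M * (a + p * s) := by ring

theorem sum_evenSub_sub_sum_oddSub (N : ℕ) (f : Finset ℕ → ℤ) :
    ∑ J ∈ evenSub N, f J - ∑ J ∈ oddSub N, f J =
      ∑ J ∈ N.primeFactors.powerset, (-1) ^ #J * f J := by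
  rw [← sum_filter_add_sum_filter_not N.primeFactors.powerset fun J => Even #J, sub_eq_add_neg,
    ← sum_neg_distrib, evenSub, oddSub]
  congr 1
  · exact sum_congr rfl fun J hJ => by rw [(mem_filter.1 hJ).2.neg_one_pow, one_mul]
  · simp only [Nat.not_even_iff_odd]
    exact sum_congr rfl fun J hJ => by rw [(mem_filter.1 hJ).2.neg_one_pow, neg_one_mul]

theorem prod_dvd_of_mem_powerset_primeFactors {N : ℕ} {J : Finset ℕ}
    (hJ : J ∈ N.primeFactors.powerset) : ∏ q ∈ J, q ∣ N :=
  (prod_dvd_prod_of_subset _ _ _ (mem_powerset.1 hJ)).trans (Nat.prod_primeFactors_dvd N)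

theorem sum_evenSub_sub_sum_oddSub_div {N : ℕ} (hN : N ≠ 0) (m : ℕ) {P : ℕ} (hP : 0 < P) :
    ∑ J ∈ evenSub N, (((N / ∏ q ∈ J, q) * m / P : ℕ) : ℤ)
        - ∑ J ∈ oddSub N, (((N / ∏ q ∈ J, q) * m / P : ℕ) : ℤ) - N.totient * (m / P : ℕ)
      = coprimeCount N (N * (m % P) / P) := by
  have hquot : ∀ J ∈ N.primeFactors.powerset,
      (N / ∏ q ∈ J, q) * m / P = N * m / P / ∏ q ∈ J, q := fun J hJ =>
    Nat.div_mul_div_eq_mul_div_div (prod_dvd_of_mem_powerset_primeFactors hJ) m P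
  rw [sum_evenSub_sub_sum_oddSub, sum_congr rfl fun J hJ => by rw [hquot J hJ],
    sum_powerset_primeFactors_neg_one_pow_mul_div hN, Nat.mul_div_eq_mul_div_add_mul_mod_div N m hP,
    coprimeCount_mul_add]
  push_cast
  ring

theorem BB_ne_zero (N m : ℕ) : BB N m ≠ 0 := by
  have hfact : ∀ n : ℕ, (n.factorial : ℚ) ≠ 0 := fun n => by positivity
  rw [BB, Bnum, Bden]
  push_cast
  exact div_ne_zero (prod_ne_zero_iff.2 fun _ _ => hfact _)
    (mul_ne_zero (prod_ne_zero_iff.2 fun _ _ => hfact _) (pow_ne_zero _ (hfact m)))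

theorem harm_add_sub_harm (n f : ℕ) :
    harm (n + f) - harm n = ∑ i ∈ range f, 1 / (((n + i : ℕ) : ℚ) + 1) := by
  rw [harm, harm, sum_range_add, add_sub_cancel_left]

section Valuation

variable {p : ℕ} [hp : Fact p.Prime]

theorem padicValRat_finset_prod {ι : Type*} {s : Finset ι} {f : ι → ℚ}
    (hf : ∀ i ∈ s, f i ≠ 0) :
    padicValRat p (∏ i ∈ s, f i) = ∑ i ∈ s, padicValRat p (f i) := by
  classical
  induction s using Finset.induction_on with
  | empty => simp
  | insert i s hi ih =>
    have hf' : ∀ j ∈ s, f j ≠ 0 := fun j hj => hf j (mem_insert_of_mem hj)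
    rw [prod_insert hi, sum_insert hi, padicValRat.mul (hf i (mem_insert_self i s))
      (prod_ne_zero_iff.2 hf'), ih hf']

theorem padicValRat_factorial {n b : ℕ} (hb : Nat.log p n < b) :
    padicValRat p (n.factorial : ℚ) = ((∑ e ∈ Ico 1 b, n / p ^ e : ℕ) : ℤ) := by
  rw [padicValRat.of_nat, padicValNat_factorial hb]

theorem padicValRat_BB {N : ℕ} (hN : N ≠ 0) {m b : ℕ} (hb : N * m < b) :
    padicValRat p (BB N m) =
      ((∑ e ∈ Ico 1 b, coprimeCount N (N * (m % p ^ e) / p ^ e) : ℕ) : ℤ) := by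
  have hlog : ∀ n ≤ N * m, Nat.log p n < b := fun n hn =>
    (Nat.log_le_self p n).trans_lt (hn.trans_lt hb)
  have hquot : ∀ J : Finset ℕ, (N / ∏ q ∈ J, q) * m ≤ N * m := fun J =>
    Nat.mul_le_mul_right m (Nat.div_le_self N _)
  have hfact : ∀ n : ℕ, (n.factorial : ℚ) ≠ 0 := fun n => by positivity
  have hm : m ≤ N * m := Nat.le_mul_of_pos_left m (Nat.pos_of_ne_zero hN)
  rw [BB, Bnum, Bden]
  push_cast
  rw [padicValRat.div (prod_ne_zero_iff.2 fun _ _ => hfact _)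
      (mul_ne_zero (prod_ne_zero_iff.2 fun _ _ => hfact _) (pow_ne_zero _ (hfact m))),
    padicValRat.mul (prod_ne_zero_iff.2 fun _ _ => hfact _) (pow_ne_zero _ (hfact m)),
    padicValRat.pow _, padicValRat_finset_prod fun _ _ => hfact _,
    padicValRat_finset_prod fun _ _ => hfact _,
    sum_congr rfl fun J _ => padicValRat_factorial (hlog _ (hquot J)),
    sum_congr rfl fun J _ => padicValRat_factorial (hlog _ (hquot J)),
    padicValRat_factorial (hlog m hm), ← sum_congr rfl fun e _ =>
      sum_evenSub_sub_sum_oddSub_div hN m (pow_pos hp.out.pos e)]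
  push_cast
  rw [sum_comm (s := evenSub N), sum_comm (s := oddSub N), mul_sum, sum_sub_distrib,
    sum_sub_distrib]
  ring

theorem padicValRat_BB_nonneg (N m : ℕ) : 0 ≤ padicValRat p (BB N m) := by
  rcases eq_or_ne N 0 with rfl | hN
  · simp [BB, Bnum, Bden, evenSub, oddSub]
  · rw [padicValRat_BB hN (Nat.lt_succ_self _)]
    exact Nat.cast_nonneg _

theorem padicValRat_BB_le_padicValRat_BBvec {k : ℕ} (N : Fin k → ℕ) (m : ℕ) (t : Fin k) :
    padicValRat p (BB (N t) m) ≤ padicValRat p (BBvec N m) := by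
  rw [BBvec, padicValRat_finset_prod fun i _ => BB_ne_zero _ _]
  exact single_le_sum (fun i _ => padicValRat_BB_nonneg (N i) m) (mem_univ t)

theorem padicValNat_lt_padicValRat_BB {a j L M i : ℕ} (ha : a < p) (hLM : L ≤ M)
    (hi : i + 1 ≤ L * a / p) :
    (padicValNat p (L * j + i + 1) : ℤ) < padicValRat p (BB M (a + p * j)) := by
  set v := padicValNat p (L * j + i + 1)
  have hM : M ≠ 0 := by
    rintro rfl
    simp [Nat.le_zero.1 hLM] at hi
  have hlevel : ∀ e ∈ Ico 1 (v + 2),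
      1 ≤ coprimeCount M (M * ((a + p * j) % p ^ e) / p ^ e) := by
    intro e he
    obtain ⟨e, rfl⟩ : ∃ e', e = e' + 1 := ⟨e - 1, by simp only [mem_Ico] at he; omega⟩
    refine one_le_coprimeCount M ((Nat.one_le_div_iff (pow_pos hp.out.pos _)).2 ?_)
    refine Nat.pow_succ_le_mul_mod ha hLM hi (Nat.pow_dvd_of_le_of_pow_dvd ?_ pow_padicValNat_dvd)
    simp only [mem_Ico] at he
    omega
  rw [padicValRat_BB hM (b := M * (a + p * j) + v + 2) (by omega), Nat.cast_lt]
  calc v < ∑ e ∈ Ico 1 (v + 2), 1 := by simp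
    _ ≤ ∑ e ∈ Ico 1 (v + 2), coprimeCount M (M * ((a + p * j) % p ^ e) / p ^ e) :=
      sum_le_sum hlevel
    _ ≤ _ := sum_le_sum_of_subset (Ico_subset_Ico_right (by omega))

theorem padicNorm_le_inv_of_one_le_padicValRat {q : ℚ} (hq : q ≠ 0)
    (h : 1 ≤ padicValRat p q) : padicNorm p q ≤ (p : ℚ)⁻¹ := by
  rw [padicNorm.eq_zpow_of_nonzero hq, ← zpow_neg_one]
  exact zpow_le_zpow_right₀ (by exact_mod_cast hp.out.one_lt.le) (neg_le_neg h)

end Valuation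

theorem BBvec_mul_harm_diff_mem_p_zp_general (p : ℕ) [hp : Fact p.Prime] (a j : ℕ) (ha : a < p)
    {k : ℕ} (N : Fin k → ℕ)
    (L : ℕ) (hL2 : L ≤ Finset.univ.sup N) :
    ‖((BBvec N (a + p * j) * (harm (L * j + L * a / p) - harm (L * j)) : ℚ) : ℚ_[p])‖
      ≤ ((p : ℝ))⁻¹ := by
  suffices hterm : ∀ i ∈ range (L * a / p),
      padicNorm p (BBvec N (a + p * j) * (1 / (((L * j + i : ℕ) : ℚ) + 1))) ≤ (p : ℚ)⁻¹ by
    rw [Padic.eq_padicNorm, harm_add_sub_harm, mul_sum]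
    exact (Rat.cast_le.2 (padicNorm.sum_le' hterm (by positivity))).trans_eq (by push_cast; rfl)
  intro i hi
  replace hi : i + 1 ≤ L * a / p := mem_range.1 hi
  have hL : 0 < L := Nat.pos_of_ne_zero fun hL => by simp [hL] at hi
  obtain ⟨t, -, hLt⟩ := (Finset.le_sup_iff hL).1 hL2
  have hBBvec : BBvec N (a + p * j) ≠ 0 := prod_ne_zero_iff.2 fun s _ => BB_ne_zero _ _
  rw [← Nat.cast_add_one, one_div, ← div_eq_mul_inv]
  refine padicNorm_le_inv_of_one_le_padicValRat (div_ne_zero hBBvec (by positivity)) ?_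
  rw [padicValRat.div hBBvec (by positivity), padicValRat.of_nat]
  have hlt := padicValNat_lt_padicValRat_BB (j := j) ha hLt hi
  have hle := padicValRat_BB_le_padicValRat_BBvec N (a + p * j) t (p := p)
  omega

/-- Lemma 1 (Krattenthaler–Rivoal): for a prime `p`, `0 ≤ a < p`, `j ≥ 0`, positive
integers `N_1, …, N_k`, and `1 ≤ L ≤ max(N_1, …, N_k)`, one has
`𝐁_𝐍(a+pj)·(H_{Lj+⌊La/p⌋} − H_{Lj}) ∈ pℤ_p`, i.e. its `p`-adic norm is at most `1/p`. -/
theorem BBvec_mul_harm_diff_mem_p_zp (p : ℕ) [hp : Fact p.Prime] (a j : ℕ) (ha : a < p)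
    {k : ℕ} (N : Fin k → ℕ) (hN : ∀ i, 0 < N i)
    (L : ℕ) (hL1 : 1 ≤ L) (hL2 : L ≤ Finset.univ.sup N) :
    ‖((BBvec N (a + p * j) * (harm (L * j + L * a / p) - harm (L * j)) : ℚ) : ℚ_[p])‖
      ≤ ((p : ℝ))⁻¹ :=
  BBvec_mul_harm_diff_mem_p_zp_general p (hp := hp) a j ha N L hL2
end

section
/- For all integers m ≥ 1 and N ≥ 1, the integer (Nm)!/m!^N is divisible by N!, i.e., (Nm)!/m!^N ∈ N!·ℤ. -/
theorem factorial_mul_factorial_pow_dvd_factorial_mul_general (m N : ℕ) (hm : 1 ≤ m) :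
    N.factorial * (m.factorial) ^ N ∣ (N * m).factorial := by
  -- `uniformBell N m` counts the partitions of an `N * m`-element set into `N` blocks of size `m`,
  -- and `(N * m)!` is that count times `m! ^ N * N!`.
  rw [← Nat.uniformBell_mul_eq N (Nat.one_le_iff_ne_zero.mp hm), mul_assoc, mul_comm N.factorial]
  exact Dvd.intro_left _ rfl

/-- For all integers `m ≥ 1` and `N ≥ 1`, the integer `B_N(m) = (Nm)!/m!^N` is
divisible by `N!`; equivalently, `N!·m!^N` divides `(Nm)!`. -/
theorem factorial_mul_factorial_pow_dvd_factorial_mul (m N : ℕ) (hm : 1 ≤ m) (hN : 1 ≤ N) :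
    N.factorial * (m.factorial) ^ N ∣ (N * m).factorial :=
  factorial_mul_factorial_pow_dvd_factorial_mul_general m N hm
end

section
/- Let N ≥ 1 be an integer with associated lists (α_i)_{i=1,…,μ} and (β_i)_{i=1,…,η}, and define Δ(x) := Σ_{i=1}^μ ⌊α_i x⌋ − Σ_{i=1}^η ⌊β_i x⌋ for real x. Then: (i) Δ(x+1) = Δ(x) for all real x, and Δ(n) = 0 for every integer n; (ii) for every integer n, Δ is weakly increasing on the interval [n, n+1); (iii) Δ(x) ≥ 0 for all real x; (iv) for every nonzero rational number r whose denominator in lowest terms belongs to {2, 3, …, N}, one has Δ(r) ≥ 1. -/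
open Finset

/-- The Landau function `Δ(x) = Σ_{i=1}^μ ⌊α_i x⌋ − Σ_{i=1}^η ⌊β_i x⌋` associated to `N`,
where the `α_i` (resp. `β_i`) are the quotients of `N` by products of evenly (resp. oddly)
many distinct prime factors of `N`, the `β` list being padded with `φ(N)` entries `1`. -/
noncomputable def Delta (N : ℕ) (x : ℝ) : ℤ :=
  (∑ J ∈ evenSub N, ⌊((N / ∏ p ∈ J, p : ℕ) : ℝ) * x⌋)
    - (∑ J ∈ oddSub N, ⌊((N / ∏ p ∈ J, p : ℕ) : ℝ) * x⌋)
    - (N.totient : ℤ) * ⌊x⌋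

/-!
Write `M = ⌊N {x}⌋`. For `d ∣ N` one has `⌊(N/d) x⌋ = ⌊M/d⌋ + (N/d)⌊x⌋`, so by inclusion–exclusion
over the squarefree divisors `d` of `N` the `⌊x⌋`-terms of `Δ(x)` add up to `φ(N)⌊x⌋` and cancel,
while the remaining terms count the integers in `[1, M]` coprime to `N`. Every property follows
from `Δ(x) = #{1 ≤ m ≤ ⌊N {x}⌋ : gcd(m, N) = 1}`; for (iv), a rational `r` with denominator
`q ∈ [2, N]` has `{r} ≥ 1/q ≥ 1/N`, so `m = 1` is counted.
-/

theorem sum_filter_even_sub_sum_filter_odd {ι R : Type*} [CommRing R] (s : Finset ι)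
    (k : ι → ℕ) (f : ι → R) :
    ∑ i ∈ s with Even (k i), f i - ∑ i ∈ s with Odd (k i), f i = ∑ i ∈ s, (-1) ^ k i * f i := by
  rw [← sum_filter_add_sum_filter_not s (fun i => Even (k i)), sub_eq_add_neg,
    ← sum_neg_distrib]
  simp only [Nat.not_even_iff_odd]
  congr 1 <;> refine sum_congr rfl fun i hi => ?_
  · rw [(mem_filter.1 hi).2.neg_one_pow, one_mul]
  · rw [(mem_filter.1 hi).2.neg_one_pow, neg_one_mul]

namespace Nat

theorem prod_dvd_of_mem_powerset_primeFactors {N : ℕ} {J : Finset ℕ}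
    (hJ : J ∈ N.primeFactors.powerset) : ∏ p ∈ J, p ∣ N :=
  (prod_dvd_prod_of_subset _ _ _ (mem_powerset.1 hJ)).trans N.prod_primeFactors_dvd

theorem filter_primeFactors_dvd_eq_empty_iff {N : ℕ} (hN : N ≠ 0) (m : ℕ) :
    {p ∈ N.primeFactors | p ∣ m} = ∅ ↔ N.Coprime m := by
  simp only [filter_eq_empty_iff, mem_primeFactors, ne_eq, hN, not_false_eq_true, and_true,
    and_imp]
  refine ⟨fun h => Nat.coprime_of_dvd h, fun h p hp hpN hpm => ?_⟩
  exact hp.one_lt.ne' (Nat.eq_one_of_dvd_coprimes h hpN hpm)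

theorem filter_powerset_primeFactors_prod_dvd (N m : ℕ) :
    {J ∈ N.primeFactors.powerset | ∏ p ∈ J, p ∣ m} = {p ∈ N.primeFactors | p ∣ m}.powerset := by
  ext J
  simp only [mem_filter, mem_powerset, subset_iff, mem_filter]
  refine ⟨fun ⟨hJ, hJm⟩ p hp => ⟨hJ hp, (dvd_prod_of_mem _ hp).trans hJm⟩,
    fun h => ⟨fun p hp => (h hp).1, prod_primes_dvd m ?_ fun p hp => (h hp).2⟩⟩
  exact fun p hp => (prime_of_mem_primeFactors (h hp).1).prime

theorem sum_neg_one_pow_card_filter_prod_dvd {N : ℕ} (hN : N ≠ 0) (m : ℕ) :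
    ∑ J ∈ N.primeFactors.powerset with ∏ p ∈ J, p ∣ m, (-1 : ℤ) ^ #J =
      if N.Coprime m then 1 else 0 := by
  rw [filter_powerset_primeFactors_prod_dvd, sum_powerset_neg_one_pow_card]
  simp only [filter_primeFactors_dvd_eq_empty_iff hN]

theorem card_filter_Ioc_coprime_eq_sum {N : ℕ} (hN : N ≠ 0) (M : ℕ) :
    (#{m ∈ Ioc 0 M | N.Coprime m} : ℤ) =
      ∑ J ∈ N.primeFactors.powerset, (-1) ^ #J * ((M / ∏ p ∈ J, p : ℕ) : ℤ) := by
  simp_rw [← Ioc_filter_dvd_card_eq_div, card_filter, Nat.cast_sum, mul_sum]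
  rw [sum_comm]
  refine sum_congr rfl fun m _ => ?_
  simp only [Nat.cast_ite, Nat.cast_one, Nat.cast_zero, mul_ite, mul_one, mul_zero, ← sum_filter,
    sum_neg_one_pow_card_filter_prod_dvd hN]

theorem totient_eq_card_filter_Ioc_coprime (N : ℕ) : φ N = #{m ∈ Ioc 0 N | N.Coprime m} := by
  rw [← filter_coprime_Ico_eq_totient N 1, add_comm, ← Ico_add_one_add_one_eq_Ioc, zero_add]

end Nat

theorem Int.floor_natCast_mul_eq_natFloor_add {R : Type*} [Ring R] [LinearOrder R]
    [IsStrictOrderedRing R] [FloorRing R] (a : ℕ) (x : R) :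
    ⌊(a : R) * x⌋ = ⌊(a : R) * fract x⌋₊ + a * ⌊x⌋ := by
  rw [Int.natCast_floor_eq_floor (mul_nonneg a.cast_nonneg (fract_nonneg x)), ← floor_add_intCast]
  congr 1
  rw [Int.fract, Int.cast_mul, Int.cast_natCast, mul_sub, sub_add_cancel]

theorem Nat.floor_natCast_div_mul {K : Type*} [Field K] [LinearOrder K] [IsStrictOrderedRing K]
    [FloorSemiring K] {N d : ℕ} (hd : d ∣ N) (y : K) :
    ⌊((N / d : ℕ) : K) * y⌋₊ = ⌊(N : K) * y⌋₊ / d := by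
  rcases eq_or_ne d 0 with rfl | hd0
  · simp
  rw [Nat.cast_div hd (by exact_mod_cast hd0), div_mul_eq_mul_div, Nat.floor_div_natCast]

theorem Rat.one_le_fract_mul_den {r : ℚ} (hr : r.den ≠ 1) : 1 ≤ Int.fract r * r.den := by
  have hfract : 0 < Int.fract r := Int.fract_pos.2 fun h => hr (by rw [h, Rat.den_intCast])
  calc 1 ≤ ((Int.fract r).num : ℚ) := by exact_mod_cast Rat.num_pos.2 hfract
    _ = Int.fract r * r.den := by rw [← Rat.den_intFract, Rat.mul_den_eq_num]

theorem Delta_eq_card_filter_coprime {N : ℕ} (hN : N ≠ 0) (x : ℝ) :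
    Delta N x = #{m ∈ Ioc 0 ⌊(N : ℝ) * Int.fract x⌋₊ | N.Coprime m} := by
  set M := ⌊(N : ℝ) * Int.fract x⌋₊
  have hterm : ∀ J ∈ N.primeFactors.powerset,
      ⌊((N / ∏ p ∈ J, p : ℕ) : ℝ) * x⌋ = (M / ∏ p ∈ J, p : ℕ) + (N / ∏ p ∈ J, p : ℕ) * ⌊x⌋ :=
    fun J hJ => by
      rw [Int.floor_natCast_mul_eq_natFloor_add,
        Nat.floor_natCast_div_mul (Nat.prod_dvd_of_mem_powerset_primeFactors hJ)]
  calc Delta N x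
      = ∑ J ∈ N.primeFactors.powerset, (-1) ^ #J * ⌊((N / ∏ p ∈ J, p : ℕ) : ℝ) * x⌋
          - N.totient * ⌊x⌋ := by
        rw [Delta, evenSub, oddSub, sum_filter_even_sub_sum_filter_odd]
    _ = ∑ J ∈ N.primeFactors.powerset, (-1) ^ #J * ((M / ∏ p ∈ J, p : ℕ) : ℤ)
          + (∑ J ∈ N.primeFactors.powerset, (-1) ^ #J * ((N / ∏ p ∈ J, p : ℕ) : ℤ)) * ⌊x⌋
          - N.totient * ⌊x⌋ := by
        rw [sum_congr rfl fun J hJ => by rw [hterm J hJ], sum_mul, ← sum_add_distrib]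
        simp only [mul_add, mul_assoc]
    _ = #{m ∈ Ioc 0 M | N.Coprime m} := by
        rw [← Nat.card_filter_Ioc_coprime_eq_sum hN, ← Nat.card_filter_Ioc_coprime_eq_sum hN,
          ← Nat.totient_eq_card_filter_Ioc_coprime]
        ring

/-- Lemma (Krattenthaler–Rivoal): properties of the Landau step function `Δ`:
(i) `Δ` is `1`-periodic and vanishes at integers; (ii) `Δ` is weakly increasing on
each interval `[n, n+1)` with `n ∈ ℤ`; (iii) `Δ(x) ≥ 0` everywhere; (iv) `Δ(r) ≥ 1`
for every nonzero rational `r` whose reduced denominator lies in `{2, …, N}`. -/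
theorem Delta_properties (N : ℕ) (hN : 1 ≤ N) :
    (∀ x : ℝ, Delta N (x + 1) = Delta N x) ∧
    (∀ n : ℤ, Delta N (n : ℝ) = 0) ∧
    (∀ n : ℤ, MonotoneOn (Delta N) (Set.Ico (n : ℝ) ((n : ℝ) + 1))) ∧
    (∀ x : ℝ, 0 ≤ Delta N x) ∧
    (∀ r : ℚ, r ≠ 0 → 2 ≤ r.den → r.den ≤ N → 1 ≤ Delta N (r : ℝ)) := by
  have hΔ := Delta_eq_card_filter_coprime (Nat.one_le_iff_ne_zero.1 hN)
  refine ⟨fun x => by rw [hΔ, hΔ, Int.fract_add_one], fun n => by simp [hΔ],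
    fun n x hx y hy hxy => ?_, fun x => by rw [hΔ]; positivity, fun r _ hr2 hrN => ?_⟩
  · have hfract : ∀ z ∈ Set.Ico (n : ℝ) (n + 1), Int.fract z = z - n := fun z hz => by
      rw [Int.fract, Int.floor_eq_on_Ico n z hz]
    rw [hΔ, hΔ, hfract x hx, hfract y hy]
    gcongr
  · have hfloor : 1 ≤ ⌊(N : ℝ) * Int.fract (r : ℝ)⌋₊ := by
      rw [Nat.one_le_floor_iff]
      calc (1 : ℝ) ≤ ((Int.fract r * r.den : ℚ) : ℝ) := by
            exact_mod_cast Rat.one_le_fract_mul_den (by omega)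
        _ ≤ N * Int.fract (r : ℝ) := by
            push_cast
            rw [mul_comm]
            gcongr
    rw [hΔ, Nat.one_le_cast, one_le_card]
    exact ⟨1, by simp [hfloor]⟩
end

section
/- Let m be a non-negative integer and N ≥ 1 an integer with associated lists (α_j)_{j=1,…,μ} and (β_j)_{j=1,…,η}, and let r_1, …, r_{φ(N)} be the elements of {1, 2, …, N} coprime to N, where φ is Euler's totient function. Then 𝐇_N(m) = Σ_{j=1}^{φ(N)} H(r_j/N, m) − φ(N)·H(1, m), where H(x, m) := Σ_{n=0}^{m−1} 1/(x+n). -/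
open Finset

/-- `𝐇_N(m) = Σ_{j=1}^μ α_j H_{α_j m} − Σ_{j=1}^η β_j H_{β_j m}` (the `φ(N)` padded
entries of the `β` list, equal to `1`, contribute `−φ(N)·H_m`). -/
noncomputable def HHbold (N m : ℕ) : ℚ :=
  (∑ J ∈ evenSub N, ((N / ∏ p ∈ J, p : ℕ) : ℚ) * harm ((N / ∏ p ∈ J, p) * m))
    - (∑ J ∈ oddSub N, ((N / ∏ p ∈ J, p : ℕ) : ℚ) * harm ((N / ∏ p ∈ J, p) * m))
    - (N.totient : ℚ) * harm m

/-- `H(x, m) = Σ_{n=0}^{m−1} 1/(x+n)`. -/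
def Hshift (x : ℚ) (m : ℕ) : ℚ := ∑ n ∈ Finset.range m, 1 / (x + n)

/-! Summing `H(r/N, m)` over the multiples `r = d s` of a divisor `d` of `N` gives
`Σ_{s=1}^{N/d} H(s/(N/d), m) = (N/d)·H_{(N/d)m}`, a multiplication formula for harmonic numbers.
Inclusion–exclusion over the squarefree divisors `d = ∏ J` of `N` (with `J` a set of prime
factors) cuts the sum down to the `r` coprime to `N`, and the sign `(-1)^#J` sorts the resulting
terms into the `α`- and `β`-lists of `𝐇_N(m)`. -/

lemma Hshift_one (m : ℕ) : Hshift 1 m = harm m :=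
  Finset.sum_congr rfl fun n _ => by rw [add_comm]

lemma harm_add (a b : ℕ) :
    harm (a + b) = harm a + ∑ i ∈ range b, 1 / (((a + i : ℕ) : ℚ) + 1) := by
  simp only [harm, sum_range_add, Nat.cast_add]

/-- Multiplication formula: `1/(s/a + n) = a/(a n + s)`, and `a n + s` runs through the `a`
integers following `a n`. -/
lemma sum_Icc_one_div_div_add (a n : ℕ) :
    ∑ s ∈ Icc 1 a, 1 / ((s : ℚ) / a + n)
      = a * ∑ i ∈ range a, 1 / (((a * n + i : ℕ) : ℚ) + 1) := by
  obtain rfl | ha := eq_or_ne a 0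
  · simp
  rw [← Ico_add_one_right_eq_Icc, sum_Ico_eq_sum_range, Nat.add_sub_cancel, mul_sum]
  refine sum_congr rfl fun i _ => ?_
  have ha' : (a : ℚ) ≠ 0 := Nat.cast_ne_zero.mpr ha
  push_cast
  field_simp
  ring

lemma sum_Icc_Hshift_div (a m : ℕ) :
    ∑ s ∈ Icc 1 a, Hshift ((s : ℚ) / a) m = a * harm (a * m) := by
  induction m with
  | zero => simp [Hshift, harm]
  | succ m ih =>
    simp only [Hshift, sum_range_succ] at ih ⊢
    rw [sum_add_distrib, ih, sum_Icc_one_div_div_add, mul_add_one, harm_add, mul_add]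

lemma sum_filter_dvd_Icc {M : Type*} [AddCommMonoid M] {d N : ℕ} (hd : d ∣ N) (f : ℕ → M) :
    ∑ r ∈ (Icc 1 N).filter (d ∣ ·), f r = ∑ s ∈ Icc 1 (N / d), f (d * s) := by
  obtain ⟨k, rfl⟩ := hd
  obtain rfl | hd0 := eq_or_ne d 0
  · simp
  rw [Nat.mul_div_cancel_left _ (Nat.pos_of_ne_zero hd0),
    ← sum_image fun x _ y _ h => Nat.eq_of_mul_eq_mul_left (Nat.pos_of_ne_zero hd0) h]
  congr 1
  ext r
  simp only [mem_filter, mem_Icc, mem_image]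
  constructor
  · rintro ⟨⟨h1, h2⟩, s, rfl⟩
    refine ⟨s, ⟨Nat.pos_of_ne_zero ?_, Nat.le_of_mul_le_mul_left h2 (Nat.pos_of_ne_zero hd0)⟩, rfl⟩
    rintro rfl
    simp at h1
  · rintro ⟨s, ⟨h1, h2⟩, rfl⟩
    exact ⟨⟨Nat.mul_pos (Nat.pos_of_ne_zero hd0) h1, Nat.mul_le_mul_left d h2⟩, dvd_mul_right d s⟩

lemma sum_filter_dvd_Hshift {d N : ℕ} (hd : d ∣ N) (m : ℕ) :
    ∑ r ∈ (Icc 1 N).filter (d ∣ ·), Hshift ((r : ℚ) / N) m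
      = ((N / d : ℕ) : ℚ) * harm ((N / d) * m) := by
  rw [sum_filter_dvd_Icc hd, ← sum_Icc_Hshift_div]
  obtain ⟨k, rfl⟩ := hd
  obtain rfl | hd0 := eq_or_ne d 0
  · simp
  refine sum_congr rfl fun s _ => ?_
  rw [Nat.mul_div_cancel_left _ (Nat.pos_of_ne_zero hd0)]
  push_cast
  rw [mul_div_mul_left _ _ (Nat.cast_ne_zero.mpr hd0)]

lemma sum_powerset_neg_one_pow_card_eq_ite {R : Type*} [Ring R] {α : Type*} [DecidableEq α]
    (x : Finset α) : ∑ J ∈ x.powerset, (-1 : R) ^ #J = if x = ∅ then 1 else 0 := by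
  have h := congrArg (Int.cast : ℤ → R) (sum_powerset_neg_one_pow_card (x := x))
  push_cast at h
  exact h

lemma powerset_filter_prod_dvd {P : Finset ℕ} (hP : ∀ p ∈ P, p.Prime) (r : ℕ) :
    P.powerset.filter (fun J => ∏ p ∈ J, p ∣ r) = (P.filter (· ∣ r)).powerset := by
  ext J
  simp only [mem_filter, mem_powerset, subset_iff, mem_filter]
  constructor
  · rintro ⟨hJP, hdvd⟩ p hp
    exact ⟨hJP hp, (dvd_prod_of_mem _ hp).trans hdvd⟩
  · intro h
    exact ⟨fun p hp => (h hp).1,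
      prod_primes_dvd r (fun p hp => (hP p (h hp).1).prime) fun p hp => (h hp).2⟩

lemma primeFactors_filter_dvd_eq_empty_iff {N : ℕ} (hN : N ≠ 0) (r : ℕ) :
    N.primeFactors.filter (· ∣ r) = ∅ ↔ r.Coprime N := by
  rw [filter_eq_empty_iff]
  constructor
  · exact fun h => Nat.coprime_of_dvd fun p hp hpr hpN =>
      h (Nat.mem_primeFactors.mpr ⟨hp, hpN, hN⟩) hpr
  · exact fun hc p hp hpr => Nat.Prime.not_coprime_iff_dvd.mpr
      ⟨p, Nat.prime_of_mem_primeFactors hp, hpr, Nat.dvd_of_mem_primeFactors hp⟩ hc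

/-- For each `r`, the signs `(-1)^#J` over the `J` with `∏ J ∣ r` are summed over the powerset of
the prime factors of `N` dividing `r`, which cancels unless that set is empty. -/
theorem sum_filter_coprime_eq_sum_powerset {R : Type*} [CommRing R] {N : ℕ} (hN : N ≠ 0)
    (S : Finset ℕ) (g : ℕ → R) :
    ∑ r ∈ S.filter (·.Coprime N), g r
      = ∑ J ∈ N.primeFactors.powerset, (-1) ^ #J * ∑ r ∈ S.filter (∏ p ∈ J, p ∣ ·), g r := by
  simp_rw [sum_filter, mul_sum, mul_ite, mul_zero]
  rw [sum_comm]
  refine sum_congr rfl fun r _ => ?_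
  rw [← sum_filter, ← sum_mul, powerset_filter_prod_dvd (fun p => Nat.prime_of_mem_primeFactors),
    sum_powerset_neg_one_pow_card_eq_ite]
  simp only [primeFactors_filter_dvd_eq_empty_iff hN, ite_mul, one_mul, zero_mul]

lemma sum_powerset_primeFactors_neg_one_pow_mul {R : Type*} [CommRing R] (N : ℕ)
    (f : Finset ℕ → R) :
    ∑ J ∈ N.primeFactors.powerset, (-1) ^ #J * f J
      = ∑ J ∈ evenSub N, f J - ∑ J ∈ oddSub N, f J := by
  rw [← sum_filter_add_sum_filter_not _ (fun J => Even #J)]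
  simp only [evenSub, oddSub, Nat.not_even_iff_odd, sub_eq_add_neg, ← sum_neg_distrib]
  congr 1 <;> refine sum_congr rfl fun J hJ => ?_
  · rw [(mem_filter.mp hJ).2.neg_one_pow, one_mul]
  · rw [(mem_filter.mp hJ).2.neg_one_pow, neg_one_mul]

/-- Lemma (Krattenthaler–Rivoal): for `m ≥ 0` and `N ≥ 1`,
`𝐇_N(m) = Σ_{j=1}^{φ(N)} H(r_j/N, m) − φ(N)·H(1, m)`, where `r_1, …, r_{φ(N)}` are the
elements of `{1, …, N}` coprime to `N`. -/
theorem HHbold_eq_sum_Hshift (N m : ℕ) (hN : 1 ≤ N) :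
    HHbold N m =
      (∑ r ∈ (Finset.Icc 1 N).filter fun r => Nat.Coprime r N, Hshift ((r : ℚ) / N) m)
        - (N.totient : ℚ) * Hshift 1 m := by
  have hdvd : ∀ J ∈ N.primeFactors.powerset, ∏ p ∈ J, p ∣ N := fun J hJ =>
    (prod_dvd_prod_of_subset _ _ _ (mem_powerset.mp hJ)).trans (Nat.prod_primeFactors_dvd N)
  rw [Hshift_one, sum_filter_coprime_eq_sum_powerset (by omega),
    sum_congr rfl fun J hJ => by rw [sum_filter_dvd_Hshift (hdvd J hJ)],
    sum_powerset_primeFactors_neg_one_pow_mul, HHbold]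
end

section
/- For every prime p and every non-negative integer J, the p-adic valuation of the rational number p·H_J − H_{⌊J/p⌋} is at least 1, i.e., p·H_J ≡ H_{⌊J/p⌋} (mod pℤ_p). -/
open Finset

lemma harm_eq_sum_Icc (n : ℕ) : harm n = ∑ i ∈ Icc 1 n, (i : ℚ)⁻¹ := by
  rw [harm, ← Ico_add_one_right_eq_Icc, sum_Ico_eq_sum_range, Nat.add_sub_cancel]
  simp [add_comm]

lemma Nat.filter_dvd_Icc_one_eq_map {r : ℕ} (hr : 0 < r) (n : ℕ) :
    {x ∈ Icc 1 n | r ∣ x} = (Icc 1 (n / r)).map ⟨(r * ·), mul_right_injective₀ hr.ne'⟩ := by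
  ext x
  simp only [mem_filter, mem_Icc, mem_map, Function.Embedding.coeFn_mk]
  constructor
  · rintro ⟨⟨hx1, hxn⟩, k, rfl⟩
    exact ⟨k, ⟨Nat.pos_of_mul_pos_left hx1, (Nat.le_div_iff_mul_le hr).2 (by linarith)⟩, rfl⟩
  · rintro ⟨k, ⟨hk1, hkn⟩, rfl⟩
    refine ⟨⟨Nat.mul_pos hr hk1, ?_⟩, dvd_mul_right r k⟩
    linarith [(Nat.le_div_iff_mul_le hr).1 hkn]

lemma mul_harm_sub_harm_div_eq_sum_not_dvd {p : ℕ} (hp : 0 < p) (n : ℕ) :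
    p * harm n - harm (n / p) = ∑ i ∈ Icc 1 n with ¬ p ∣ i, (p / i : ℚ) := by
  have h_dvd : ∑ i ∈ Icc 1 n with p ∣ i, (p / i : ℚ) = harm (n / p) := by
    rw [Nat.filter_dvd_Icc_one_eq_map hp, sum_map, harm_eq_sum_Icc]
    refine sum_congr rfl fun k _ => ?_
    simp only [Function.Embedding.coeFn_mk, Nat.cast_mul]
    have : (p : ℚ) ≠ 0 := by exact_mod_cast hp.ne'
    field_simp
  rw [← h_dvd, harm_eq_sum_Icc, mul_sum, ← sum_filter_add_sum_filter_not _ (p ∣ ·)]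
  simp [div_eq_mul_inv]

lemma Padic.norm_natCast_div_of_not_dvd {p : ℕ} [Fact p.Prime] {i : ℕ} (hi : ¬ p ∣ i) :
    ‖(p / i : ℚ_[p])‖ = (p : ℝ)⁻¹ := by
  rw [norm_div, norm_p, norm_natCast_eq_one_iff.2 ((Nat.Prime.coprime_iff_not_dvd Fact.out).2 hi),
    div_one]

/-- For every prime `p` and every `J ≥ 0`, `p·H_J ≡ H_{⌊J/p⌋} (mod pℤ_p)`: the rational
number `p·H_J − H_{⌊J/p⌋}` has `p`-adic norm at most `1/p`. -/
theorem p_mul_harm_sub_harm_div_mem_p_zp (p : ℕ) [hp : Fact p.Prime] (J : ℕ) :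
    ‖(((p : ℚ) * harm J - harm (J / p) : ℚ) : ℚ_[p])‖ ≤ ((p : ℝ))⁻¹ := by
  rw [mul_harm_sub_harm_div_eq_sum_not_dvd hp.out.pos]
  push_cast
  refine IsUltrametricDist.norm_sum_le_of_forall_le_of_nonneg (by positivity) fun i hi => ?_
  exact (Padic.norm_natCast_div_of_not_dvd (mem_filter.1 hi).2).le
end
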